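/- Let U ⊆ (0,∞) be an open set, let φ(s) = 2s^{2/3}/(1+2s) and ψ(s) = -4s^{1/3}/(1+2s), and suppose the derivative φ'(s) ≠ 0 for every s ∈ U. Let H : ℝ → ℝ be six times differentiable on an open set V ⊆ ℝ containing φ(U), and suppose H(φ(s)) = ψ(s) for all s ∈ U. Then H satisfies Noth's equation at every point of φ(U): for all t ∈ φ(U), 10·(H''(t))³·H⁽⁶⁾(t) − 70·(H''(t))²·H⁽³⁾(t)·H⁽⁵⁾(t) − 49·(H''(t))²·(H⁽⁴⁾(t))² + 280·H''(t)·(H⁽³⁾(t))²·H⁽⁴⁾(t) − 175·(H⁽³⁾(t))⁴ = 0. -/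

import Mathlib

/-!
Write `s = c³`. The curve `c ↦ (x(c), y(c)) = (2c², -4c) / (1 + 2c³)` lies in the graph of `H`,
so each derivative of `H` at `x(c)` is the `c`-derivative of the previous one divided by
`x'(c) = W(c) / (1 + 2c³)²`, where `W = 4c - 4c⁴` is the Wronskian of the two polynomials
defining `x`. By induction `H⁽ᵏ⁺¹⁾(x(c)) = Pₖ(c) / W(c)^(2k+1)` for polynomials `Pₖ` given by the
quotient rule, and Noth's equation at `x(c)` becomes a polynomial identity between `P₁, …, P₅`,
checked once they are computed in closed form. Since `φ'(1) = 0`, `U` avoids `s = 1`, the only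
positive zero of `W`.
-/

/-- Noth's equation at a point `t` for a function `H`, expressed via iterated derivatives. -/
def NothEqAt (H : ℝ → ℝ) (t : ℝ) : Prop :=
  10 * (iteratedDeriv 2 H t) ^ 3 * iteratedDeriv 6 H t
    - 70 * (iteratedDeriv 2 H t) ^ 2 * iteratedDeriv 3 H t * iteratedDeriv 5 H t
    - 49 * (iteratedDeriv 2 H t) ^ 2 * (iteratedDeriv 4 H t) ^ 2
    + 280 * iteratedDeriv 2 H t * (iteratedDeriv 3 H t) ^ 2 * iteratedDeriv 4 H t
    - 175 * (iteratedDeriv 3 H t) ^ 4 = 0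

open Polynomial Filter Topology

section GraphDerivatives

variable {𝕜 : Type*} [NontriviallyNormedField 𝕜]

theorem deriv_eq_div_of_comp_eventuallyEq {G x f : 𝕜 → 𝕜} {c x' f' : 𝕜}
    (hx : HasDerivAt x x' c) (hx' : x' ≠ 0) (hG : DifferentiableAt 𝕜 G (x c))
    (hf : G ∘ x =ᶠ[𝓝 c] f) (hf' : HasDerivAt f f' c) : deriv G (x c) = f' / x' :=
  eq_div_of_mul_eq hx' <| ((hG.hasDerivAt.comp c hx).congr_of_eventuallyEq hf.symm).unique hf'

theorem Polynomial.hasDerivAt_eval_div (P Q : 𝕜[X]) {c : 𝕜} (hQ : Q.eval c ≠ 0) :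
    HasDerivAt (fun c => P.eval c / Q.eval c) ((wronskian Q P).eval c / Q.eval c ^ 2) c :=
  ((P.hasDerivAt c).div (Q.hasDerivAt c) hQ).congr_deriv <| by
    simp only [wronskian, eval_sub, eval_mul]; ring

theorem Polynomial.hasDerivAt_eval_div_pow (P Q : 𝕜[X]) (m : ℕ) {c : 𝕜} (hQ : Q.eval c ≠ 0) :
    HasDerivAt (fun c => P.eval c / Q.eval c ^ m)
      ((derivative P * Q - m * P * derivative Q).eval c / Q.eval c ^ (m + 1)) c :=
  ((P.hasDerivAt c).div ((Q.hasDerivAt c).pow m) (pow_ne_zero m hQ)).congr_deriv <| by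
    rcases m with _ | m
    · field_simp; simp
    · simp only [Pi.pow_apply, eval_sub, eval_mul, eval_natCast, add_tsub_cancel_right]
      field_simp
      ring

/-- The quotient rule for `P / W ^ (2k+1)`, divided by the speed `W / B²` of `A / B`, where
`W = wronskian B A`. -/
noncomputable def graphDerivNumer (A B E : 𝕜[X]) : ℕ → 𝕜[X]
  | 0 => wronskian B E
  | k + 1 => (derivative (graphDerivNumer A B E k) * wronskian B A
      - ((2 * k + 1 : ℕ) : 𝕜[X]) * graphDerivNumer A B E k * derivative (wronskian B A)) * B ^ 2

theorem iteratedDeriv_succ_eq_graphDerivNumer {A B E : 𝕜[X]} {H : 𝕜 → 𝕜} {W : Set 𝕜}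
    (hW : IsOpen W)
    (hB : ∀ c ∈ W, B.eval c ≠ 0) (hBA : ∀ c ∈ W, (wronskian B A).eval c ≠ 0)
    (hgraph : ∀ c ∈ W, H (A.eval c / B.eval c) = E.eval c / B.eval c) (k : ℕ)
    (hH : ∀ j ≤ k, ∀ c ∈ W, DifferentiableAt 𝕜 (iteratedDeriv j H) (A.eval c / B.eval c)) :
    ∀ c ∈ W, iteratedDeriv (k + 1) H (A.eval c / B.eval c) =
      (graphDerivNumer A B E k).eval c / (wronskian B A).eval c ^ (2 * k + 1) := by
  induction k with
  | zero =>
    intro c hc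
    have hf : H ∘ (fun c => A.eval c / B.eval c) =ᶠ[𝓝 c] fun c => E.eval c / B.eval c :=
      eventually_of_mem (hW.mem_nhds hc) hgraph
    rw [iteratedDeriv_one, deriv_eq_div_of_comp_eventuallyEq (hasDerivAt_eval_div A B (hB c hc))
      (div_ne_zero (hBA c hc) (pow_ne_zero 2 (hB c hc)))
      (iteratedDeriv_zero (f := H) ▸ hH 0 le_rfl c hc) hf (hasDerivAt_eval_div E B (hB c hc)),
      graphDerivNumer, mul_zero, zero_add, pow_one]
    field_simp [hB c hc, hBA c hc]
  | succ k ih =>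
    intro c hc
    have hf : iteratedDeriv (k + 1) H ∘ (fun c => A.eval c / B.eval c) =ᶠ[𝓝 c]
        fun c => (graphDerivNumer A B E k).eval c / (wronskian B A).eval c ^ (2 * k + 1) :=
      eventually_of_mem (hW.mem_nhds hc) (ih fun j hj => hH j (hj.trans k.le_succ))
    rw [iteratedDeriv_succ, deriv_eq_div_of_comp_eventuallyEq (hasDerivAt_eval_div A B (hB c hc))
      (div_ne_zero (hBA c hc) (pow_ne_zero 2 (hB c hc))) (hH (k + 1) le_rfl c hc) hf
      (hasDerivAt_eval_div_pow _ _ _ (hBA c hc)), graphDerivNumer]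
    simp only [eval_mul, eval_pow]
    field_simp [hB c hc, hBA c hc]
    ring

end GraphDerivatives

theorem nothEqAt_of_iteratedDeriv_eq_div {H : ℝ → ℝ} {t d : ℝ} (p : ℕ → ℝ)
    (hp : ∀ k, 1 ≤ k → k ≤ 5 → iteratedDeriv (k + 1) H t = p k / d ^ (2 * k + 1))
    (h : 10 * p 1 ^ 3 * p 5 - 70 * p 1 ^ 2 * p 2 * p 4 - 49 * p 1 ^ 2 * p 3 ^ 2
      + 280 * p 1 * p 2 ^ 2 * p 3 - 175 * p 2 ^ 4 = 0) : NothEqAt H t := by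
  rw [NothEqAt, hp 1 le_rfl (by norm_num), hp 2 (by norm_num) (by norm_num),
    hp 3 (by norm_num) (by norm_num), hp 4 (by norm_num) (by norm_num), hp 5 (by norm_num) le_rfl]
  -- every term carries the factor `d⁻²⁰`
  linear_combination h / d ^ 20

namespace Noth

noncomputable def xNum : ℝ[X] := 2 * X ^ 2

noncomputable def yNum : ℝ[X] := -4 * X

noncomputable def denom : ℝ[X] := 1 + 2 * X ^ 3

noncomputable abbrev numer : ℕ → ℝ[X] := graphDerivNumer xNum denom yNum

theorem derivative_denom : derivative denom = 6 * X ^ 2 := by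
  simp only [denom, derivative_add, derivative_one, derivative_mul, derivative_ofNat,
    derivative_X_pow, map_natCast]
  ring

theorem wronskian_denom_xNum : wronskian denom xNum = 4 * X - 4 * X ^ 4 := by
  simp only [wronskian, derivative_denom, xNum, derivative_mul, derivative_ofNat,
    derivative_X_pow, map_natCast]
  simp only [denom]
  ring

theorem numer_zero : numer 0 = 16 * X ^ 3 - 4 := by
  simp only [numer, graphDerivNumer, wronskian, derivative_denom, yNum, derivative_mul,
    derivative_neg, derivative_ofNat, derivative_X]
  simp only [denom]
  ring

theorem numer_succ (k : ℕ) : numer (k + 1) = (derivative (numer k) * (4 * X - 4 * X ^ 4)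
    - ((2 * k + 1 : ℕ) : ℝ[X]) * numer k * (4 - 16 * X ^ 3)) * denom ^ 2 := by
  simp only [numer, graphDerivNumer, wronskian_denom_xNum, derivative_sub, derivative_mul,
    derivative_ofNat, derivative_X_pow, derivative_X, map_natCast]
  ring

theorem numer_one : numer 1 = 16 * denom ^ 4 := by
  rw [numer_succ, numer_zero]
  simp only [derivative_sub, derivative_mul, derivative_pow, derivative_X, derivative_ofNat,
    map_natCast]
  simp only [denom]
  push_cast
  ring

theorem numer_two : numer 2 = 192 * denom ^ 5 * (10 * X ^ 3 - 1) := by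
  rw [numer_succ, numer_one]
  simp only [derivative_mul, derivative_pow, derivative_denom, derivative_ofNat, map_natCast]
  simp only [denom]
  push_cast
  ring

theorem numer_three :
    numer 3 = 3840 * denom ^ 6 * (1 - 12 * X ^ 3 + 84 * X ^ 6 + 8 * X ^ 9) := by
  rw [numer_succ, numer_two]
  simp only [derivative_sub, derivative_one, derivative_mul, derivative_pow, derivative_X,
    derivative_denom, derivative_ofNat, map_natCast]
  simp only [denom]
  push_cast
  ring

theorem numer_four : numer 4 = 15360 * denom ^ 7 *
    (-7 + 98 * X ^ 3 - 700 * X ^ 6 + 4552 * X ^ 9 + 1144 * X ^ 12 + 16 * X ^ 15) := by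
  rw [numer_succ, numer_three]
  simp only [derivative_add, derivative_sub, derivative_one, derivative_mul, derivative_pow,
    derivative_X, derivative_denom, derivative_ofNat, map_natCast]
  simp only [denom]
  push_cast
  ring

theorem numer_five : numer 5 = 3870720 * denom ^ 8 *
    (1 - 16 * X ^ 3 + 128 * X ^ 6 - 696 * X ^ 9 + 4840 * X ^ 12 + 2176 * X ^ 15
      + 128 * X ^ 18) := by
  rw [numer_succ, numer_four]
  simp only [derivative_add, derivative_sub, derivative_neg, derivative_mul, derivative_pow,
    derivative_X, derivative_denom, derivative_ofNat, map_natCast]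
  simp only [denom]
  push_cast
  ring

theorem numer_noth_eq_zero : 10 * numer 1 ^ 3 * numer 5 - 70 * numer 1 ^ 2 * numer 2 * numer 4
    - 49 * numer 1 ^ 2 * numer 3 ^ 2 + 280 * numer 1 * numer 2 ^ 2 * numer 3
    - 175 * numer 2 ^ 4 = 0 := by
  rw [numer_one, numer_two, numer_three, numer_four, numer_five]
  ring

theorem eval_xNum_div_denom {c : ℝ} (hc : 0 ≤ c) :
    xNum.eval c / denom.eval c = 2 * (c ^ 3) ^ ((2 : ℝ) / 3) / (1 + 2 * c ^ 3) := by
  rw [← Real.rpow_natCast, ← Real.rpow_mul hc]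
  norm_num [xNum, denom]

theorem eval_yNum_div_denom {c : ℝ} (hc : 0 ≤ c) :
    yNum.eval c / denom.eval c = -(4 * (c ^ 3) ^ ((1 : ℝ) / 3)) / (1 + 2 * c ^ 3) := by
  rw [← Real.rpow_natCast, ← Real.rpow_mul hc]
  norm_num [yNum, denom, neg_div]

theorem eval_denom_ne_zero {c : ℝ} (hc : 0 ≤ c) : denom.eval c ≠ 0 := by
  simp only [denom, eval_add, eval_one, eval_mul, eval_ofNat, eval_pow, eval_X]
  positivity

theorem eval_wronskian_denom_xNum_ne_zero {c : ℝ} (hc : 0 < c) (hc1 : c ≠ 1) :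
    (wronskian denom xNum).eval c ≠ 0 := by
  have hc3 : c ^ 3 ≠ 1 := fun h => hc1 ((pow_eq_one_iff_of_nonneg hc.le three_ne_zero).1 h)
  have : 4 * c * (1 - c ^ 3) ≠ 0 := by
    have := sub_ne_zero.2 hc3.symm
    positivity
  simp only [wronskian_denom_xNum, eval_sub, eval_mul, eval_ofNat, eval_pow, eval_X]
  convert this using 1
  ring

theorem nothEqAt_of_graph {H : ℝ → ℝ} {W : Set ℝ} (hW : IsOpen W) (hWpos : W ⊆ Set.Ioi 0)
    (hW1 : (1 : ℝ) ∉ W)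
    (hgraph : ∀ c ∈ W, H (xNum.eval c / denom.eval c) = yNum.eval c / denom.eval c)
    (hH : ∀ j ≤ 5, ∀ c ∈ W, DifferentiableAt ℝ (iteratedDeriv j H) (xNum.eval c / denom.eval c))
    {c : ℝ} (hc : c ∈ W) : NothEqAt H (xNum.eval c / denom.eval c) := by
  have hB : ∀ c ∈ W, denom.eval c ≠ 0 := fun c hc => eval_denom_ne_zero (hWpos hc).le
  have hBA : ∀ c ∈ W, (wronskian denom xNum).eval c ≠ 0 := fun c hc =>
    eval_wronskian_denom_xNum_ne_zero (hWpos hc) (ne_of_mem_of_not_mem hc hW1)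
  refine nothEqAt_of_iteratedDeriv_eq_div (fun k => (numer k).eval c) (fun k _ hk =>
    iteratedDeriv_succ_eq_graphDerivNumer hW hB hBA hgraph k
      (fun j hj => hH j (hj.trans hk)) c hc) ?_
  simpa only [eval_sub, eval_add, eval_mul, eval_pow, eval_ofNat, eval_zero] using
    congrArg (eval c) numer_noth_eq_zero

end Noth

theorem noth_parametrization_two
    (U V : Set ℝ) (hU : IsOpen U) (hUpos : U ⊆ Set.Ioi (0 : ℝ))
    (φ ψ H : ℝ → ℝ)
    (hφ : ∀ s : ℝ, φ s = 2 * s ^ ((2 : ℝ) / 3) / (1 + 2 * s))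
    (hψ : ∀ s : ℝ, ψ s = -(4 * s ^ ((1 : ℝ) / 3)) / (1 + 2 * s))
    (hφ' : ∀ s ∈ U, deriv φ s ≠ 0)
    (hVU : φ '' U ⊆ V)
    (hdiff : ∀ k < 6, ∀ t ∈ V, DifferentiableAt ℝ (iteratedDeriv k H) t)
    (hpar : ∀ s ∈ U, H (φ s) = ψ s) :
    ∀ t ∈ φ '' U, NothEqAt H t := by
  have hone : (1 : ℝ) ∉ U := fun h1 => hφ' 1 h1 <| by
    have h := ((Real.hasDerivAt_rpow_const (x := 1) (p := 2 / 3) (Or.inl one_ne_zero)).const_mul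
      2).div (((hasDerivAt_id (1 : ℝ)).const_mul 2).const_add 1) (by norm_num)
    rw [show φ = _ from funext hφ]
    exact (h.congr_deriv (by norm_num)).deriv
  set W := {c : ℝ | 0 < c ∧ c ^ 3 ∈ U}
  have hφW : ∀ c ∈ W, φ (c ^ 3) = Noth.xNum.eval c / Noth.denom.eval c := fun c hc => by
    rw [hφ, Noth.eval_xNum_div_denom hc.1.le]
  rintro _ ⟨s, hs, rfl⟩
  obtain ⟨c, hc, rfl⟩ : ∃ c ∈ W, c ^ 3 = s := by
    have hs0 : 0 < s := hUpos hs
    refine ⟨s ^ ((3 : ℕ) : ℝ)⁻¹, ⟨Real.rpow_pos_of_pos hs0 _, ?_⟩,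
      Real.rpow_inv_natCast_pow hs0.le three_ne_zero⟩
    rwa [Real.rpow_inv_natCast_pow hs0.le three_ne_zero]
  rw [hφW c hc]
  refine Noth.nothEqAt_of_graph (isOpen_Ioi.inter (hU.preimage (continuous_pow 3)))
    (fun c hc => hc.1) (fun h => hone (by simpa using h.2)) (fun c hc => ?_)
    (fun j hj c hc => hdiff j (by omega) _ (hVU ⟨_, hc.2, hφW c hc⟩)) hc
  rw [← hφW c hc, hpar _ hc.2, hψ, Noth.eval_yNum_div_denom hc.1.le]
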